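/- Sharpness of the ACE bounds: Suppose the observed conditional laws p_z(x, y) = P(X = x, Y = y | Z = z), z ∈ {1,…,K}, arise from some model satisfying assumption (i) with instrument law π (π(z) > 0 for all z). Then there exist models on some probability space — random variables Z, X(z_1),…,X(z_K), Y(x_0), Y(x_1) satisfying assumption (i), with Z having law π and P(X = x, Y = y | Z = z) = p_z(x, y) for all x, y, z — in which ACE(X → Y) = g(0, 0) + g(1, 1) − 1, and (another such model) in which ACE(X → Y) = 1 − g(1, 0) − g(0, 1). -/

import Mathlib

open MeasureTheory ProbabilityTheory

/-- The bound `g(i, j)` of Theorem 2, expressed in terms of conditional laws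
`p z x y` (interpreted as `P(X = x, Y = y | Z = z)`):
`g(i,j) = min{ min_z [ p_z(X=i,Y=j) + p_z(X=1−i) ],`
`min_{z ≠ z̃} [ p_z(X=i,Y=j) + p_z(X=1−i,Y=0) + p_{z̃}(X=i,Y=j) + p_{z̃}(X=1−i,Y=1) ] }`,
where `p_z(X = 1−i) = p_z(X=1−i, Y=0) + p_z(X=1−i, Y=1)`. -/
noncomputable def gOf {K : ℕ} (hK : 2 ≤ K) (p : Fin K → Fin 2 → Fin 2 → ℝ)
    (i j : Fin 2) : ℝ :=
  min
    ((Finset.univ : Finset (Fin K)).inf'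
      ⟨⟨0, by omega⟩, Finset.mem_univ _⟩
      (fun z => p z i j + (p z (1 - i) 0 + p z (1 - i) 1)))
    (((Finset.univ : Finset (Fin K × Fin K)).filter (fun q => q.1 ≠ q.2)).inf'
      ⟨(⟨0, by omega⟩, ⟨1, by omega⟩), by
        simp only [Finset.mem_filter, Finset.mem_univ, true_and]
        exact fun h => absurd (congrArg Fin.val h) (by simp)⟩
      (fun q => p q.1 i j + p q.1 (1 - i) 0 + p q.2 i j + p q.2 (1 - i) 1))

/-- A binary instrumental-variable model with instrument law `π` and observed conditional
laws `p z x y = P(X = x, Y = y | Z = z)`, satisfying assumption (i): joint independence of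
`Z` from `(Y(x₀), Y(x₁), X(z₁), …, X(z_K))`.  The observed treatment is `X = X(Z)` and the
observed outcome is `Y = Y(X)`. -/
structure IVModel (K : ℕ) (π : Fin K → ℝ) (p : Fin K → Fin 2 → Fin 2 → ℝ) where
  (Ω : Type)
  [m : MeasurableSpace Ω]
  (P : Measure Ω)
  prob : IsProbabilityMeasure P
  Z : Ω → Fin K
  Xz : Fin K → Ω → Fin 2
  Y0 : Ω → Fin 2
  Y1 : Ω → Fin 2
  hZ : Measurable Z
  hXz : ∀ z, Measurable (Xz z)
  hY0 : Measurable Y0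
  hY1 : Measurable Y1
  indep : IndepFun Z (fun ω => (Y0 ω, Y1 ω, fun z => Xz z ω)) P
  law_Z : ∀ z, (P (Z ⁻¹' {z})).toReal = π z
  law_cond : ∀ (z : Fin K) (x y : Fin 2),
    (P[|Z ⁻¹' {z}] {ω | Xz (Z ω) ω = x ∧
      (if Xz (Z ω) ω = 0 then Y0 ω else Y1 ω) = y}).toReal = p z x y

/-!
In every model `P(Y(xᵢ) = j) ≤ g(i, j)`: each term of the minimum is a union bound for the event
`Y(xᵢ) = j`, which is revealed at every instrument value where `X = i`. A model with
`P(Y(x₀) = 0) = g(0, 0)` and `P(Y(x₁) = 1) = g(1, 1)` therefore has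
`ACE = g(1, 1) - (1 - g(0, 0))`, and such a model is built from a law `t` of the response type
`(Y(x₀), Y(x₁))` and, for each `z`, the masses `r z c = P(type = c, X(z) = 0)` reproducing `p_z`;
the treatments `X(z)` are made conditionally independent given the type and `Z` is drawn
independently. Once `g(0, 0)` and `g(1, 1)` are fixed, `t` and `r z` have one free parameter each,
`τ = t(0, 1)` and `s z = r z (0, 1)`, and these are found by Fourier–Motzkin elimination: every
lower bound must lie below every upper bound. Those compatibility conditions are the inequalities
defining `g`, together with inequalities that hold because `p` comes from some model.

The other bound follows by relabelling the outcome `Y ↦ 1 - Y`, which turns `g(i, j)` into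
`g(i, 1 - j)` and negates the ACE.
-/

section DiscreteMeasure

variable {α : Type*} [Fintype α] [MeasurableSpace α] [MeasurableSingletonClass α]

noncomputable def discreteMeasure (u : α → ℝ) : Measure α :=
  ∑ a, ENNReal.ofReal (u a) • Measure.dirac a

theorem discreteMeasure_apply (u : α → ℝ) (s : Set α) :
    discreteMeasure u s = ∑ a, s.indicator (fun a => ENNReal.ofReal (u a)) a := by
  simp only [discreteMeasure, Measure.coe_finsetSum, Finset.sum_apply, Measure.smul_apply,
    Measure.dirac_apply, smul_eq_mul]
  exact Finset.sum_congr rfl fun a _ => by by_cases h : a ∈ s <;> simp [h]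

theorem discreteMeasure_singleton (u : α → ℝ) (a : α) :
    discreteMeasure u {a} = ENNReal.ofReal (u a) := by
  rw [discreteMeasure_apply, Finset.sum_eq_single a (fun b _ hb => by simp [hb]) (by simp)]
  simp

theorem measureReal_discreteMeasure {u : α → ℝ} (hu : ∀ a, 0 ≤ u a) (s : Set α) :
    (discreteMeasure u).real s = ∑ a, s.indicator u a := by
  rw [Measure.real, discreteMeasure_apply, ENNReal.toReal_sum fun a _ => by
    by_cases h : a ∈ s <;> simp [h]]
  exact Finset.sum_congr rfl fun a _ => by by_cases h : a ∈ s <;> simp [h, hu a]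

theorem isProbabilityMeasure_discreteMeasure {u : α → ℝ} (hu : ∀ a, 0 ≤ u a)
    (hu1 : ∑ a, u a = 1) : IsProbabilityMeasure (discreteMeasure u) := by
  constructor
  rw [discreteMeasure_apply]
  simp [← ENNReal.ofReal_sum_of_nonneg fun a _ => hu a, hu1]

end DiscreteMeasure

section CondIndepLaw

variable {ι C B : Type*} [Fintype ι] [Fintype C] [Fintype B]
  [MeasurableSpace C] [MeasurableSingletonClass C] [MeasurableSpace B] [MeasurableSingletonClass B]

noncomputable def condIndepLaw (t : C → ℝ) (q : ι → C → B → ℝ) : Measure (C × (ι → B)) :=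
  discreteMeasure t ⊗ₘ Kernel.ofFunOfCountable fun c => Measure.pi fun i => discreteMeasure (q i c)

variable {t : C → ℝ} {q : ι → C → B → ℝ}

theorem isMarkovKernel_pi_discreteMeasure (hq : ∀ i c b, 0 ≤ q i c b)
    (hq1 : ∀ i c, ∑ b, q i c b = 1) :
    IsMarkovKernel (Kernel.ofFunOfCountable fun c => Measure.pi fun i => discreteMeasure (q i c)) :=
  ⟨fun c => by
    have := fun i => isProbabilityMeasure_discreteMeasure (hq i c) (hq1 i c)
    exact Measure.pi.instIsProbabilityMeasure _⟩

theorem isProbabilityMeasure_condIndepLaw (ht : ∀ c, 0 ≤ t c) (ht1 : ∑ c, t c = 1)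
    (hq : ∀ i c b, 0 ≤ q i c b) (hq1 : ∀ i c, ∑ b, q i c b = 1) :
    IsProbabilityMeasure (condIndepLaw t q) := by
  have := isProbabilityMeasure_discreteMeasure ht ht1
  have := isMarkovKernel_pi_discreteMeasure hq hq1
  unfold condIndepLaw
  infer_instance

theorem map_fst_condIndepLaw (hq : ∀ i c b, 0 ≤ q i c b) (hq1 : ∀ i c, ∑ b, q i c b = 1) :
    (condIndepLaw t q).map Prod.fst = discreteMeasure t := by
  have := isMarkovKernel_pi_discreteMeasure hq hq1
  exact Measure.fst_compProd _ _

theorem map_eval_condIndepLaw (hq : ∀ i c b, 0 ≤ q i c b) (hq1 : ∀ i c, ∑ b, q i c b = 1)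
    (i : ι) :
    (condIndepLaw t q).map (fun ℓ => (ℓ.1, ℓ.2 i)) =
      discreteMeasure fun cb : C × B => t cb.1 * q i cb.1 cb.2 := by
  have := isMarkovKernel_pi_discreteMeasure hq hq1
  have := fun c i => isProbabilityMeasure_discreteMeasure (hq i c) (hq1 i c)
  refine Measure.ext_iff_singleton.mpr fun ⟨c, b⟩ => ?_
  have hpre : (fun ℓ : C × (ι → B) => (ℓ.1, ℓ.2 i)) ⁻¹' {(c, b)} =
      {c} ×ˢ (Function.eval i ⁻¹' ({b} : Set B)) := by
    ext ℓ; simp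
  rw [Measure.map_apply (by fun_prop) (measurableSet_singleton _), hpre, condIndepLaw,
    Measure.compProd_apply_prod (measurableSet_singleton c)
      (measurable_pi_apply i (measurableSet_singleton b)),
    lintegral_singleton]
  dsimp only [Kernel.ofFunOfCountable, Kernel.coe_mk]
  rw [(measurePreserving_eval _ i).measure_preimage (measurableSet_singleton b).nullMeasurableSet,
    discreteMeasure_singleton, discreteMeasure_singleton, discreteMeasure_singleton,
    ← ENNReal.ofReal_mul (hq i c b), mul_comm]

end CondIndepLaw

theorem ProbabilityTheory.IndepFun.cond_eq_of_inter_eq {Ω α β : Type*} {mΩ : MeasurableSpace Ω}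
    [MeasurableSpace α] [MeasurableSpace β] {μ : Measure Ω} [IsFiniteMeasure μ] {Z : Ω → α}
    {W : Ω → β} (h : IndepFun Z W μ) (hZ : Measurable Z) {A : Set α} (hA : MeasurableSet A)
    (hμA : μ (Z ⁻¹' A) ≠ 0) {B : Set β} (hB : MeasurableSet B) {E : Set Ω}
    (hE : Z ⁻¹' A ∩ E = Z ⁻¹' A ∩ W ⁻¹' B) :
    μ[E | Z ⁻¹' A] = μ (W ⁻¹' B) := by
  rw [cond_apply (hZ hA), hE, h.measure_inter_preimage_eq_mul A B hA hB, ← mul_assoc,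
    ENNReal.inv_mul_cancel hμA (measure_ne_top μ _), one_mul]

section UnionBound

variable {α : Type*} [MeasurableSpace α] {μ : Measure α} [IsFiniteMeasure μ] {s a b c d : Set α}

theorem measureReal_le_add_of_subset_union₃ (h : s ⊆ a ∪ b ∪ c) :
    μ.real s ≤ μ.real a + μ.real b + μ.real c :=
  (measureReal_mono h).trans <| (measureReal_union_le _ _).trans <| by
    gcongr; exact measureReal_union_le _ _

theorem measureReal_le_add_of_subset_union₄ (h : s ⊆ a ∪ b ∪ c ∪ d) :
    μ.real s ≤ μ.real a + μ.real b + μ.real c + μ.real d :=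
  (measureReal_mono h).trans <| (measureReal_union_le _ _).trans <| by
    gcongr; exact measureReal_le_add_of_subset_union₃ subset_rfl

end UnionBound

theorem exists_forall_le_and_forall_le {ι κ : Type*} [Finite ι] [Nonempty ι] {a : ι → ℝ}
    {b : κ → ℝ} (h : ∀ i j, a i ≤ b j) : ∃ x, (∀ i, a i ≤ x) ∧ ∀ j, x ≤ b j :=
  ⟨⨆ i, a i, fun i => le_ciSup (Set.finite_range a).bddAbove i, fun j => ciSup_le fun i => h i j⟩

section gOf

variable {K : ℕ} (hK : 2 ≤ K) (p : Fin K → Fin 2 → Fin 2 → ℝ) (i j : Fin 2)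

theorem gOf_le_single (z : Fin K) : gOf hK p i j ≤ p z i j + (p z (1 - i) 0 + p z (1 - i) 1) :=
  (min_le_left _ _).trans (Finset.inf'_le _ (Finset.mem_univ z))

theorem gOf_le_pair {z z' : Fin K} (h : z ≠ z') :
    gOf hK p i j ≤ p z i j + p z (1 - i) 0 + p z' i j + p z' (1 - i) 1 :=
  (min_le_right _ _).trans (Finset.inf'_le _ (Finset.mem_filter.2 ⟨Finset.mem_univ (z, z'), h⟩))

theorem le_gOf {a : ℝ} (h₁ : ∀ z, a ≤ p z i j + (p z (1 - i) 0 + p z (1 - i) 1))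
    (h₂ : ∀ z z', z ≠ z' → a ≤ p z i j + p z (1 - i) 0 + p z' i j + p z' (1 - i) 1) :
    a ≤ gOf hK p i j :=
  le_min (Finset.le_inf' _ _ fun z _ => h₁ z)
    (Finset.le_inf' _ _ fun zz hzz => h₂ zz.1 zz.2 (by simpa using hzz))

theorem gOf_flip : gOf hK (fun z x y => p z x (1 - y)) i j = gOf hK p i (1 - j) := by
  apply le_antisymm
  · refine le_gOf hK p i (1 - j) (fun z => ?_) (fun z z' h => ?_)
    · have := gOf_le_single hK (fun z x y => p z x (1 - y)) i j z
      simp only [sub_zero, sub_self] at this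
      linarith
    · have := gOf_le_pair hK (fun z x y => p z x (1 - y)) i j h.symm
      simp only [sub_zero, sub_self] at this
      linarith
  · refine le_gOf hK _ i j (fun z => ?_) (fun z z' h => ?_)
    · have := gOf_le_single hK p i (1 - j) z
      simp only [sub_zero, sub_self]
      linarith
    · have := gOf_le_pair hK p i (1 - j) h.symm
      simp only [sub_zero, sub_self]
      linarith

end gOf

theorem cond_observed_eq {Ω : Type*} [MeasurableSpace Ω] {P : Measure Ω} [IsFiniteMeasure P]
    {K : ℕ} {Z : Ω → Fin K} {Xz : Fin K → Ω → Fin 2} {Y0 Y1 : Ω → Fin 2} (hZ : Measurable Z)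
    (hindep : IndepFun Z (fun ω => (Y0 ω, Y1 ω, fun z => Xz z ω)) P) {z : Fin K}
    (hz : P (Z ⁻¹' {z}) ≠ 0) (x y : Fin 2) :
    P[{ω | Xz (Z ω) ω = x ∧ (if Xz (Z ω) ω = 0 then Y0 ω else Y1 ω) = y} | Z ⁻¹' {z}] =
      P {ω | Xz z ω = x ∧ (if x = 0 then Y0 ω else Y1 ω) = y} := by
  refine hindep.cond_eq_of_inter_eq hZ (measurableSet_singleton z) hz
    (B := {w | w.2.2 z = x ∧ (if x = 0 then w.1 else w.2.1) = y}) .of_discrete ?_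
  ext ω
  simp only [Set.mem_inter_iff, Set.mem_preimage, Set.mem_singleton_iff, Set.mem_ofPred_eq]
  constructor <;> rintro ⟨rfl, rfl, hy⟩ <;> exact ⟨rfl, rfl, hy⟩

namespace IVModel

variable {K : ℕ} {π : Fin K → ℝ} {p : Fin K → Fin 2 → Fin 2 → ℝ} (M : IVModel K π p)

instance : MeasurableSpace M.Ω := M.m

instance : IsProbabilityMeasure M.P := M.prob

def Y (x : Fin 2) (ω : M.Ω) : Fin 2 := if x = 0 then M.Y0 ω else M.Y1 ω

def obs (z : Fin K) (ω : M.Ω) : Fin 2 × Fin 2 := (M.Xz z ω, M.Y (M.Xz z ω) ω)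

noncomputable def ace : ℝ := M.P.real {ω | M.Y1 ω = 1} - M.P.real {ω | M.Y0 ω = 1}

theorem measurable_obs (z : Fin K) : Measurable (M.obs z) :=
  (M.hXz z).prodMk <| Measurable.ite (M.hXz z (measurableSet_singleton 0)) M.hY0 M.hY1

theorem sum_pi (M : IVModel K π p) : ∑ z, π z = 1 := by
  rw [← Finset.sum_congr rfl fun z _ => M.law_Z z]
  change ∑ z, M.P.real (M.Z ⁻¹' {z}) = 1
  rw [sum_measureReal_preimage_singleton _ fun z _ => M.hZ (measurableSet_singleton z)]
  simp

theorem p_nonneg (M : IVModel K π p) (z : Fin K) (x y : Fin 2) : 0 ≤ p z x y :=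
  M.law_cond z x y ▸ ENNReal.toReal_nonneg

theorem measureReal_obs (hπ : ∀ z, 0 < π z) (z : Fin K) (x y : Fin 2) :
    M.P.real (M.obs z ⁻¹' {(x, y)}) = p z x y := by
  have hz : M.P (M.Z ⁻¹' {z}) ≠ 0 := fun h =>
    (hπ z).ne' (by rw [← M.law_Z z, h, ENNReal.toReal_zero])
  rw [← M.law_cond z x y, cond_observed_eq M.hZ M.indep hz x y]
  congr 2
  ext ω
  simp only [Set.mem_preimage, Set.mem_singleton_iff, obs, Y, Prod.mk.injEq, Set.mem_ofPred_eq]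
  constructor <;> rintro ⟨rfl, hy⟩ <;> exact ⟨rfl, hy⟩

theorem sum_p (M : IVModel K π p) (hπ : ∀ z, 0 < π z) (z : Fin K) : ∑ x, ∑ y, p z x y = 1 := by
  simp_rw [← M.measureReal_obs hπ z, ← Fintype.sum_prod_type']
  rw [sum_measureReal_preimage_singleton _ fun c _ =>
    M.measurable_obs z (measurableSet_singleton c)]
  simp

theorem p_le_measureReal_Y (hπ : ∀ z, 0 < π z) (z : Fin K) (i j : Fin 2) :
    p z i j ≤ M.P.real {ω | M.Y i ω = j} := by
  rw [← M.measureReal_obs hπ]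
  refine measureReal_mono fun ω hω => ?_
  simp only [Set.mem_preimage, Set.mem_singleton_iff, obs, Prod.mk.injEq] at hω
  obtain ⟨hx, hy⟩ := hω
  rw [hx] at hy
  exact hy

theorem measureReal_Y_le_gOf (hK : 2 ≤ K) (hπ : ∀ z, 0 < π z) (i j : Fin 2) :
    M.P.real {ω | M.Y i ω = j} ≤ gOf hK p i j := by
  refine le_gOf hK p i j (fun z => ?_) (fun z z' _ => ?_) <;>
    simp only [← M.measureReal_obs hπ, ← add_assoc]
  · refine measureReal_le_add_of_subset_union₃ fun ω (hω : M.Y i ω = j) => ?_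
    simp only [Set.mem_union, Set.mem_preimage, Set.mem_singleton_iff, obs, Y,
      Prod.mk.injEq] at hω ⊢
    generalize M.Xz z ω = a, M.Y0 ω = u, M.Y1 ω = v at hω ⊢
    revert a u v i j; decide
  · refine measureReal_le_add_of_subset_union₄ fun ω (hω : M.Y i ω = j) => ?_
    simp only [Set.mem_union, Set.mem_preimage, Set.mem_singleton_iff, obs, Y,
      Prod.mk.injEq] at hω ⊢
    generalize M.Xz z ω = a, M.Xz z' ω = b, M.Y0 ω = u, M.Y1 ω = v at hω ⊢
    revert a b u v i j; decide

/-- The two events on the left are disjoint; off `{Y(xᵢ) = j}` the second one forces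
`Y(x_{1-i}) = Y(xᵢ) = 1 - j`, which the observation at `z` reveals whatever `X(z)` is. -/
theorem p_add_p_le_measureReal_Y_add (hπ : ∀ z, 0 < π z) (z z' : Fin K) (i j : Fin 2) :
    p z' i j + p z' (1 - i) (1 - j) ≤
      M.P.real {ω | M.Y i ω = j} + p z (1 - i) (1 - j) + p z i (1 - j) := by
  simp only [← M.measureReal_obs hπ]
  rw [← measureReal_union ((Set.disjoint_singleton.2 (by revert i j; decide)).preimage _)
    (M.measurable_obs z' (measurableSet_singleton _))]
  refine measureReal_le_add_of_subset_union₃ fun ω hω => ?_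
  simp only [Set.mem_union, Set.mem_preimage, Set.mem_singleton_iff, obs, Y,
    Prod.mk.injEq, Set.mem_ofPred_eq] at hω ⊢
  generalize M.Xz z ω = a, M.Xz z' ω = b, M.Y0 ω = u, M.Y1 ω = v at hω ⊢
  revert a b u v i j; decide

def flipOutcome {q : Fin K → Fin 2 → Fin 2 → ℝ} (hq : ∀ z x y, q z x y = p z x (1 - y)) :
    IVModel K π q where
  Ω := M.Ω
  P := M.P
  prob := M.prob
  Z := M.Z
  Xz := M.Xz
  Y0 ω := 1 - M.Y0 ω
  Y1 ω := 1 - M.Y1 ω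
  hZ := M.hZ
  hXz := M.hXz
  hY0 := Measurable.of_discrete.comp M.hY0
  hY1 := Measurable.of_discrete.comp M.hY1
  indep := M.indep.comp measurable_id
    (Measurable.of_discrete
      (f := fun w : Fin 2 × Fin 2 × (Fin K → Fin 2) => (1 - w.1, 1 - w.2.1, w.2.2)))
  law_Z := M.law_Z
  law_cond z x y := by
    rw [hq, ← M.law_cond z x (1 - y)]
    congr 2
    ext ω
    simp only [Set.mem_ofPred_eq]
    generalize M.Xz (M.Z ω) ω = a, M.Y0 ω = u, M.Y1 ω = v
    revert a u v x y; decide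

theorem ace_flipOutcome {q : Fin K → Fin 2 → Fin 2 → ℝ} (hq : ∀ z x y, q z x y = p z x (1 - y)) :
    (M.flipOutcome hq).ace = -M.ace := by
  have hcompl (Y : M.Ω → Fin 2) (hY : Measurable Y) :
      M.P.real {ω | 1 - Y ω = 1} = 1 - M.P.real {ω | Y ω = 1} := by
    rw [← probReal_compl_eq_one_sub (s := {ω | Y ω = 1}) (hY (measurableSet_singleton 1))]
    congr 1
    ext ω
    simp only [Set.mem_ofPred_eq, Set.mem_compl_iff]
    generalize Y ω = a
    revert a; decide
  change M.P.real {ω | 1 - M.Y1 ω = 1} - M.P.real {ω | 1 - M.Y0 ω = 1} = -M.ace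
  rw [ace, hcompl _ M.hY0, hcompl _ M.hY1]
  ring

end IVModel

/-- The latent variable `ℓ` stands for `((Y(x₀), Y(x₁)), (X(z))_z)`. -/
theorem exists_ivModel_of_latent {K : ℕ} {π : Fin K → ℝ} {p : Fin K → Fin 2 → Fin 2 → ℝ}
    (hπ : ∀ z, 0 < π z) (hπ1 : ∑ z, π z = 1)
    (ν : Measure ((Fin 2 × Fin 2) × (Fin K → Fin 2))) [IsProbabilityMeasure ν]
    (hν : ∀ z x y, ν.real {ℓ | ℓ.2 z = x ∧ (if x = 0 then ℓ.1.1 else ℓ.1.2) = y} = p z x y) :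
    ∃ M : IVModel K π p, M.ace = ν.real {ℓ | ℓ.1.2 = 1} - ν.real {ℓ | ℓ.1.1 = 1} := by
  have := isProbabilityMeasure_discreteMeasure (fun z => (hπ z).le) hπ1
  set P := (discreteMeasure π).prod ν
  have hindep : IndepFun Prod.fst (fun ω : Fin K × _ => (ω.2.1.1, ω.2.1.2, ω.2.2)) P :=
    indepFun_prod (X := id)
      (Y := fun ℓ : (Fin 2 × Fin 2) × (Fin K → Fin 2) => (ℓ.1.1, ℓ.1.2, ℓ.2)) measurable_id
      .of_discrete
  have hZ z : P (Prod.fst ⁻¹' {z}) = ENNReal.ofReal (π z) := by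
    rw [measurePreserving_fst.measure_preimage (measurableSet_singleton z).nullMeasurableSet,
      discreteMeasure_singleton]
  have hW s : P.real (Prod.snd ⁻¹' s) = ν.real s :=
    measurePreserving_snd.measureReal_preimage MeasurableSet.of_discrete.nullMeasurableSet
  refine ⟨{ Ω := Fin K × ((Fin 2 × Fin 2) × (Fin K → Fin 2))
            P := P
            prob := inferInstance
            Z := Prod.fst
            Xz := fun z ω => ω.2.2 z
            Y0 := fun ω => ω.2.1.1
            Y1 := fun ω => ω.2.1.2
            hZ := measurable_fst
            hXz := by fun_prop
            hY0 := by fun_prop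
            hY1 := by fun_prop
            indep := hindep
            law_Z := fun z => by rw [hZ, ENNReal.toReal_ofReal (hπ z).le]
            law_cond := fun z x y => by
              rw [cond_observed_eq measurable_fst hindep (by simp [hZ, hπ z]), ← hν, ← hW]
              rfl }, ?_⟩
  rw [IVModel.ace, ← hW, ← hW]
  rfl

/-- `t y₀ y₁ = P(Y(x₀) = y₀, Y(x₁) = y₁)` and `r z y₀ y₁ = P(Y(x₀) = y₀, Y(x₁) = y₁, X(z) = 0)`. -/
structure ResponseTypeLaw (K : ℕ) (p : Fin K → Fin 2 → Fin 2 → ℝ) where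
  t : Fin 2 → Fin 2 → ℝ
  r : Fin K → Fin 2 → Fin 2 → ℝ
  t_nonneg : ∀ y₀ y₁, 0 ≤ t y₀ y₁
  sum_t : ∑ y₀, ∑ y₁, t y₀ y₁ = 1
  r_nonneg : ∀ z y₀ y₁, 0 ≤ r z y₀ y₁
  r_le_t : ∀ z y₀ y₁, r z y₀ y₁ ≤ t y₀ y₁
  p_zero_zero : ∀ z, p z 0 0 = r z 0 0 + r z 0 1
  p_zero_one : ∀ z, p z 0 1 = r z 1 0 + r z 1 1
  p_one_zero : ∀ z, p z 1 0 = t 0 0 - r z 0 0 + (t 1 0 - r z 1 0)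
  p_one_one : ∀ z, p z 1 1 = t 0 1 - r z 0 1 + (t 1 1 - r z 1 1)

namespace ResponseTypeLaw

variable {K : ℕ} {p : Fin K → Fin 2 → Fin 2 → ℝ} (T : ResponseTypeLaw K p)

/-- Also when `t y₀ y₁ = 0`: then `r z y₀ y₁ = 0`, and `0 / 0 = 0`. -/
theorem t_mul_r_div_t (z : Fin K) (y₀ y₁ : Fin 2) :
    T.t y₀ y₁ * (T.r z y₀ y₁ / T.t y₀ y₁) = T.r z y₀ y₁ :=
  mul_div_cancel_of_imp' fun h => le_antisymm (h ▸ T.r_le_t z y₀ y₁) (T.r_nonneg z y₀ y₁)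

noncomputable def condLawX (z : Fin K) (c : Fin 2 × Fin 2) : Fin 2 → ℝ :=
  ![T.r z c.1 c.2 / T.t c.1 c.2, 1 - T.r z c.1 c.2 / T.t c.1 c.2]

theorem condLawX_nonneg (z : Fin K) (c : Fin 2 × Fin 2) (x : Fin 2) : 0 ≤ T.condLawX z c x := by
  have h₀ : 0 ≤ T.r z c.1 c.2 / T.t c.1 c.2 := div_nonneg (T.r_nonneg z _ _) (T.t_nonneg _ _)
  have h₁ : T.r z c.1 c.2 / T.t c.1 c.2 ≤ 1 := div_le_one_of_le₀ (T.r_le_t z _ _) (T.t_nonneg _ _)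
  fin_cases x <;> simp [condLawX] <;> linarith

theorem sum_condLawX (z : Fin K) (c : Fin 2 × Fin 2) : ∑ x, T.condLawX z c x = 1 := by
  simp [condLawX, Fin.sum_univ_two]

noncomputable def latentLaw : Measure ((Fin 2 × Fin 2) × (Fin K → Fin 2)) :=
  condIndepLaw (fun c => T.t c.1 c.2) T.condLawX

instance : IsProbabilityMeasure T.latentLaw :=
  isProbabilityMeasure_condIndepLaw (fun c => T.t_nonneg c.1 c.2)
    (by simpa [Fintype.sum_prod_type] using T.sum_t) T.condLawX_nonneg T.sum_condLawX

theorem measureReal_latentLaw_observed (z : Fin K) (x y : Fin 2) :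
    T.latentLaw.real {ℓ | ℓ.2 z = x ∧ (if x = 0 then ℓ.1.1 else ℓ.1.2) = y} = p z x y := by
  change T.latentLaw.real ((fun ℓ => (ℓ.1, ℓ.2 z)) ⁻¹'
    {cx | cx.2 = x ∧ (if x = 0 then cx.1.1 else cx.1.2) = y}) = p z x y
  rw [← map_measureReal_apply (by fun_prop) .of_discrete, latentLaw,
    map_eval_condIndepLaw T.condLawX_nonneg T.sum_condLawX,
    measureReal_discreteMeasure fun cx => mul_nonneg (T.t_nonneg _ _) (T.condLawX_nonneg _ _ _)]
  fin_cases x <;> fin_cases y <;>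
    simp [Fintype.sum_prod_type, Set.indicator_apply, condLawX, mul_sub, t_mul_r_div_t,
      T.p_zero_zero, T.p_zero_one, T.p_one_zero, T.p_one_one] <;> ring

theorem measureReal_latentLaw_fst (s : Set (Fin 2 × Fin 2)) :
    T.latentLaw.real (Prod.fst ⁻¹' s) = ∑ c, s.indicator (fun c => T.t c.1 c.2) c := by
  rw [← map_measureReal_apply measurable_fst .of_discrete, latentLaw,
    map_fst_condIndepLaw T.condLawX_nonneg T.sum_condLawX]
  exact measureReal_discreteMeasure (u := fun c : Fin 2 × Fin 2 => T.t c.1 c.2)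
    (fun c => T.t_nonneg c.1 c.2) s

theorem exists_ivModel {π : Fin K → ℝ} (hπ : ∀ z, 0 < π z) (hπ1 : ∑ z, π z = 1) :
    ∃ M : IVModel K π p, M.ace = T.t 0 1 - T.t 1 0 := by
  obtain ⟨M, hM⟩ := exists_ivModel_of_latent hπ hπ1 T.latentLaw T.measureReal_latentLaw_observed
  refine ⟨M, hM.trans ?_⟩
  rw [show {ℓ : (Fin 2 × Fin 2) × (Fin K → Fin 2) | ℓ.1.2 = 1} = Prod.fst ⁻¹' {c | c.2 = 1}
      from rfl,
    show {ℓ : (Fin 2 × Fin 2) × (Fin K → Fin 2) | ℓ.1.1 = 1} = Prod.fst ⁻¹' {c | c.1 = 1}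
      from rfl,
    measureReal_latentLaw_fst, measureReal_latentLaw_fst]
  simp [Fintype.sum_prod_type, Set.indicator_apply]

end ResponseTypeLaw

/-- The response-type law with parameters `τ = t 0 1` and `s z = r z 0 1`; the bounds on `τ` are
those that make the bounds on each `s z` compatible. -/
theorem exists_responseTypeLaw_of_bounds {K : ℕ} [NeZero K] {p : Fin K → Fin 2 → Fin 2 → ℝ}
    {g₀ g₁ τ : ℝ} (hp : ∀ z x y, 0 ≤ p z x y)
    (hsum : ∀ z, p z 0 0 + p z 0 1 + p z 1 0 + p z 1 1 = 1)
    (hle₀ : ∀ z, p z 0 0 ≤ g₀) (hle₁ : ∀ z, p z 1 1 ≤ g₁)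
    (hg₀_single : ∀ z, g₀ ≤ p z 0 0 + p z 1 0 + p z 1 1)
    (hg₁_single : ∀ z, g₁ ≤ p z 1 1 + p z 0 0 + p z 0 1)
    (hτ_lo : ∀ z k, ![0, g₀ + g₁ - 1, g₀ + p z 0 1 + p z 1 1 - 1, g₁ - p z 0 1 - p z 1 1] k ≤ τ)
    (hτ_hi : ∀ z k, τ ≤ ![g₀, g₁, p z 0 0 + p z 1 1, g₀ + g₁ - p z 0 0 - p z 1 1] k) :
    ∃ T : ResponseTypeLaw K p, T.t 0 0 + T.t 0 1 = g₀ ∧ T.t 0 1 + T.t 1 1 = g₁ := by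
  simp only [Fin.forall_fin_succ, Matrix.cons_val_zero, Matrix.cons_val_succ,
    Matrix.cons_val_fin_one, forall_const] at hτ_lo hτ_hi
  have hs z : ∃ s, (∀ k, ![0, τ + p z 0 0 - g₀, g₁ - p z 0 1 - p z 1 1, τ - p z 1 1] k ≤ s) ∧
      ∀ k, s ≤ ![p z 0 0, τ, 1 - g₀ + τ - p z 0 1 - p z 1 1, g₁ - p z 1 1] k := by
    obtain ⟨_, _, _, _⟩ := hτ_lo z
    obtain ⟨_, _, _, _⟩ := hτ_hi z
    refine exists_forall_le_and_forall_le fun k k' => ?_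
    fin_cases k <;> fin_cases k' <;> simp <;>
      linarith [hp z 0 0, hp z 0 1, hp z 1 0, hp z 1 1, hsum z, hg₀_single z, hg₁_single z,
        hle₀ z, hle₁ z]
  choose s hs_lo hs_hi using hs
  simp only [Fin.forall_fin_succ, Matrix.cons_val_zero, Matrix.cons_val_succ,
    Matrix.cons_val_fin_one, forall_const] at hs_lo hs_hi
  obtain ⟨_, _, _, _⟩ := hτ_lo 0
  obtain ⟨_, _, _, _⟩ := hτ_hi 0
  refine ⟨{ t := ![![g₀ - τ, τ], ![1 - g₀ - g₁ + τ, g₁ - τ]]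
            r := fun z => ![![p z 0 0 - s z, s z],
              ![p z 0 1 + p z 1 1 - g₁ + s z, g₁ - p z 1 1 - s z]]
            t_nonneg := ?_, sum_t := ?_, r_nonneg := ?_, r_le_t := ?_, p_zero_zero := ?_,
            p_zero_one := ?_, p_one_zero := ?_, p_one_one := ?_ }, by simp, by simp⟩
  · intro y₀ y₁; fin_cases y₀ <;> fin_cases y₁ <;> simp <;> linarith
  · simp [Fin.sum_univ_two]
  all_goals intro z
  · intro y₀ y₁
    obtain ⟨_, _, _, _⟩ := hs_lo z; obtain ⟨_, _, _, _⟩ := hs_hi z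
    fin_cases y₀ <;> fin_cases y₁ <;> simp <;> linarith
  · intro y₀ y₁
    obtain ⟨_, _, _, _⟩ := hs_lo z; obtain ⟨_, _, _, _⟩ := hs_hi z
    fin_cases y₀ <;> fin_cases y₁ <;> simp <;> linarith
  · simp
  · simp
  · simp only [Matrix.cons_val', Matrix.cons_val_zero, Matrix.cons_val_one,
      Matrix.cons_val_fin_one]
    linarith [hsum z]
  · simp only [Matrix.cons_val', Matrix.cons_val_zero, Matrix.cons_val_one,
      Matrix.cons_val_fin_one]
    ring

theorem exists_responseTypeLaw {K : ℕ} (hK : 2 ≤ K) {p : Fin K → Fin 2 → Fin 2 → ℝ}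
    (hp : ∀ z x y, 0 ≤ p z x y) (hp1 : ∀ z, ∑ x, ∑ y, p z x y = 1) {g₀ g₁ : ℝ}
    (hg₀ : g₀ ≤ gOf hK p 0 0) (hg₁ : g₁ ≤ gOf hK p 1 1)
    (hle₀ : ∀ z, p z 0 0 ≤ g₀) (hle₁ : ∀ z, p z 1 1 ≤ g₁)
    (hcross₀ : ∀ z z', p z' 0 0 + p z' 1 1 ≤ g₀ + p z 1 1 + p z 0 1)
    (hcross₁ : ∀ z z', p z' 1 1 + p z' 0 0 ≤ g₁ + p z 0 0 + p z 1 0) :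
    ∃ T : ResponseTypeLaw K p, T.t 0 0 + T.t 0 1 = g₀ ∧ T.t 0 1 + T.t 1 1 = g₁ := by
  have : NeZero K := ⟨by omega⟩
  have hsum z : p z 0 0 + p z 0 1 + p z 1 0 + p z 1 1 = 1 := by
    simpa [Fin.sum_univ_two, add_assoc] using hp1 z
  have hg₀_single z : g₀ ≤ p z 0 0 + p z 1 0 + p z 1 1 := by
    have := hg₀.trans (gOf_le_single hK p 0 0 z); simp only [sub_zero] at this; linarith
  have hg₁_single z : g₁ ≤ p z 1 1 + p z 0 0 + p z 0 1 := by
    have := hg₁.trans (gOf_le_single hK p 1 1 z); simp only [sub_self] at this; linarith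
  have hg₀_pair z z' : g₀ ≤ p z 0 0 + p z 1 0 + p z' 0 0 + p z' 1 1 := by
    rcases eq_or_ne z z' with rfl | h
    · linarith [hg₀_single z, hp z 0 0]
    · simpa using hg₀.trans (gOf_le_pair hK p 0 0 h)
  have hg₁_pair z z' : g₁ ≤ p z 1 1 + p z 0 0 + p z' 1 1 + p z' 0 1 := by
    rcases eq_or_ne z z' with rfl | h
    · linarith [hg₁_single z, hp z 1 1]
    · simpa using hg₁.trans (gOf_le_pair hK p 1 1 h)
  obtain ⟨τ, hτ_lo, hτ_hi⟩ := exists_forall_le_and_forall_le (ι := Fin K × Fin 4)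
    (κ := Fin K × Fin 4)
    (a := fun zk => ![0, g₀ + g₁ - 1, g₀ + p zk.1 0 1 + p zk.1 1 1 - 1,
      g₁ - p zk.1 0 1 - p zk.1 1 1] zk.2)
    (b := fun zk => ![g₀, g₁, p zk.1 0 0 + p zk.1 1 1, g₀ + g₁ - p zk.1 0 0 - p zk.1 1 1] zk.2)
    (by
      rintro ⟨z, k⟩ ⟨z', k'⟩
      fin_cases k <;> fin_cases k' <;> simp <;>
        linarith [hp z 0 0, hp z 0 1, hp z 1 0, hp z 1 1, hp z' 0 0, hp z' 0 1, hp z' 1 0,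
          hp z' 1 1, hsum z, hsum z', hg₀_single z, hg₀_single z', hg₁_single z, hg₁_single z',
          hg₀_pair z z', hg₀_pair z' z, hg₁_pair z z', hg₁_pair z' z, hle₀ z, hle₀ z', hle₁ z,
          hle₁ z', hcross₀ z z', hcross₀ z' z, hcross₁ z z', hcross₁ z' z])
  exact exists_responseTypeLaw_of_bounds hp hsum hle₀ hle₁ hg₀_single hg₁_single
    (fun z k => hτ_lo (z, k)) (fun z k => hτ_hi (z, k))

theorem IVModel.exists_ace_eq_gOf_add_gOf {K : ℕ} (hK : 2 ≤ K) {π : Fin K → ℝ}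
    (hπ : ∀ z, 0 < π z) {p : Fin K → Fin 2 → Fin 2 → ℝ} (M : IVModel K π p) :
    ∃ M' : IVModel K π p, M'.ace = gOf hK p 0 0 + gOf hK p 1 1 - 1 := by
  have hY₀ := M.measureReal_Y_le_gOf hK hπ 0 0
  have hY₁ := M.measureReal_Y_le_gOf hK hπ 1 1
  obtain ⟨T, hT₀, hT₁⟩ := exists_responseTypeLaw hK M.p_nonneg (M.sum_p hπ) le_rfl le_rfl
    (fun z => (M.p_le_measureReal_Y hπ z 0 0).trans hY₀)
    (fun z => (M.p_le_measureReal_Y hπ z 1 1).trans hY₁)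
    (fun z z' => by
      have := M.p_add_p_le_measureReal_Y_add hπ z z' 0 0
      simp only [sub_zero] at this; linarith)
    (fun z z' => by
      have := M.p_add_p_le_measureReal_Y_add hπ z z' 1 1
      simp only [sub_self] at this; linarith)
  obtain ⟨M', hM'⟩ := T.exists_ivModel hπ M.sum_pi
  have := T.sum_t
  simp only [Fin.sum_univ_two] at this
  exact ⟨M', by rw [hM']; linarith⟩

/-- sharpness of the ACE bounds: if the observed conditional laws `p z`
arise from some model satisfying assumption (i) with instrument law `π` (positive
everywhere), then there is a model — with the same instrument law `π` and the same observed
conditional laws `p`, satisfying assumption (i) — in which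
`ACE(X → Y) = P(Y(x₁)=1) − P(Y(x₀)=1) = g(0,0) + g(1,1) − 1`, and another such model in
which `ACE(X → Y) = 1 − g(1,0) − g(0,1)`. -/
theorem stmt11 (K : ℕ) (hK : 2 ≤ K)
    (π : Fin K → ℝ) (hπpos : ∀ z, 0 < π z)
    (p : Fin K → Fin 2 → Fin 2 → ℝ)
    (hmodel : Nonempty (IVModel K π p)) :
    (∃ M : IVModel K π p,
      (M.P {ω | M.Y1 ω = 1}).toReal - (M.P {ω | M.Y0 ω = 1}).toReal =
        gOf hK p 0 0 + gOf hK p 1 1 - 1) ∧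
    (∃ M : IVModel K π p,
      (M.P {ω | M.Y1 ω = 1}).toReal - (M.P {ω | M.Y0 ω = 1}).toReal =
        1 - gOf hK p 1 0 - gOf hK p 0 1) := by
  obtain ⟨M⟩ := hmodel
  refine ⟨M.exists_ace_eq_gOf_add_gOf hK hπpos, ?_⟩
  obtain ⟨N, hN⟩ := (M.flipOutcome fun _ _ _ => rfl).exists_ace_eq_gOf_add_gOf hK hπpos
  refine ⟨N.flipOutcome fun z x y => by simp, (N.ace_flipOutcome _).trans ?_⟩
  rw [hN, gOf_flip, gOf_flip]
  simp only [sub_zero, sub_self]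
  ring
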